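/- Suppose ẇ estimation obeys w̃ᵀŵ' ≥ −w̃ᵀ((1/(2Q))·(∂h/∂u)ψ + (ϱ/2)ŵ) (from the projection lemma), where w̃ = w − ŵ. Then, along solutions of u̇ = v + wψ with ḣ = (∂h/∂u)ᵀu̇ + (∂h/∂κ)ᵀκ̇ − 2Q·w̃ᵀw̃' for h̄ = h − Q‖w̃‖², if additionally |(∂h/∂κ)ᵀκ̇| ≤ ζ and the controller v satisfies (∂h/∂u)ᵀ(v + ŵψ) − ζ + (ϱ/2)(h − Q·w̄²) ≥ 0 with ‖w‖ ≤ w̄, then h̄'(t) ≥ −(ϱ/2)·h̄(t). -/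

import Mathlib

open RealInnerProductSpace

theorem acbf_invariance_ineq {m : ℕ}
    (w wh wh' Dhu v : EuclideanSpace ℝ (Fin m))
    (ψ Q ϱ ζ wbar κterm h hbar hbar' : ℝ)
    (hQ : 0 < Q) (hϱ : 0 < ϱ) (hζ : 0 ≤ ζ)
    (hw : ‖w‖ ≤ wbar)
    (hproj : ⟪w - wh, wh'⟫ ≥ -⟪w - wh, (1 / (2 * Q)) • (ψ • Dhu) + (ϱ / 2) • wh⟫)
    (hbar_def : hbar = h - Q * ‖w - wh‖ ^ 2)
    (hbar'_def : hbar' = ⟪Dhu, v + ψ • w⟫ + κterm + 2 * Q * ⟪w - wh, wh'⟫)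
    (hκ : |κterm| ≤ ζ)
    (hctrl : ⟪Dhu, v + ψ • wh⟫ - ζ + (ϱ / 2) * (h - Q * wbar ^ 2) ≥ 0) :
    hbar' ≥ -(ϱ / 2) * hbar := by
  have hexp : ⟪w - wh, (1 / (2 * Q)) • (ψ • Dhu) + (ϱ / 2) • wh⟫
      = (1 / (2 * Q)) * (ψ * ⟪w - wh, Dhu⟫) + (ϱ / 2) * ⟪w - wh, wh⟫ := by
    rw [inner_add_right, real_inner_smul_right, real_inner_smul_right,
      real_inner_smul_right]
  have hwd : ⟪w - wh, Dhu⟫ = ⟪Dhu, w⟫ - ⟪Dhu, wh⟫ := by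
    rw [inner_sub_left, real_inner_comm w Dhu, real_inner_comm wh Dhu]
  have hww : ⟪w - wh, wh⟫ = ⟪w - wh, w⟫ - ‖w - wh‖ ^ 2 := by
    calc ⟪w - wh, wh⟫ = ⟪w - wh, w - (w - wh)⟫ := by rw [sub_sub_cancel]
      _ = ⟪w - wh, w⟫ - ⟪w - wh, w - wh⟫ := by rw [inner_sub_right]
      _ = ⟪w - wh, w⟫ - ‖w - wh‖ ^ 2 := by rw [real_inner_self_eq_norm_sq]
  have hcs : ⟪w - wh, w⟫ ≤ ‖w - wh‖ * ‖w‖ := real_inner_le_norm _ _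
  have hwbar0 : 0 ≤ wbar := le_trans (norm_nonneg w) hw
  have hww2 : ⟪w - wh, wh⟫ ≤ (wbar ^ 2 - ‖w - wh‖ ^ 2) / 2 := by
    rw [hww]
    nlinarith [norm_nonneg (w - wh), norm_nonneg w, sq_nonneg (‖w - wh‖ - ‖w‖)]
  have hv1 : ⟪Dhu, v + ψ • w⟫ = ⟪Dhu, v⟫ + ψ * ⟪Dhu, w⟫ := by
    rw [inner_add_right, real_inner_smul_right]
  have hv2 : ⟪Dhu, v + ψ • wh⟫ = ⟪Dhu, v⟫ + ψ * ⟪Dhu, wh⟫ := by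
    rw [inner_add_right, real_inner_smul_right]
  rw [hexp] at hproj
  have hQ' : (2 * Q) ≠ 0 := by positivity
  have hproj2 : 2 * Q * ⟪w - wh, wh'⟫ ≥
      -(ψ * ⟪w - wh, Dhu⟫ + Q * ϱ * ⟪w - wh, wh⟫) := by
    have h0 : 2 * Q * (-(1 / (2 * Q) * (ψ * ⟪w - wh, Dhu⟫) + ϱ / 2 * ⟪w - wh, wh⟫))
        = -(ψ * ⟪w - wh, Dhu⟫ + Q * ϱ * ⟪w - wh, wh⟫) := by
      field_simp
    have h1 := mul_le_mul_of_nonneg_left hproj (by positivity : (0:ℝ) ≤ 2 * Q)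
    rw [h0] at h1
    exact h1
  have hκ' : κterm ≥ -ζ := by
    have := abs_le.mp hκ; linarith [this.1]
  rw [hbar_def, hbar'_def, hv1]
  rw [hv2] at hctrl
  rw [hwd] at hproj2
  nlinarith [hproj2, hctrl, hκ',
    mul_le_mul_of_nonneg_left hww2 (by positivity : (0:ℝ) ≤ Q * ϱ)]
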